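/- Let m_1, ..., m_k be positive real numbers and let m and r be positive integers. Then there exists a positive constant h such that if a = \sum_{i=1}^k a_i m_i / r for some integers a_1, ..., a_k with each a_i \geq -m, and a > 0, then a \geq h. -/

import Mathlib

/-!
Write `a = ∑ cᵢ wᵢ` with weights `wᵢ = mᵢ / r > 0`. Since every `cᵢ ≥ -M`, a bound `a ≤ 1` caps
every `cᵢ` from above, so only finitely many values of `a` lie in `(0, 1]`, and their minimum
(or `1`) is the required `h`.
-/

open Filter Finset Set Topology

lemma exists_pos_forall_le_of_finite_inter_Ioc {S : Set ℝ} (hS : (S ∩ Ioc 0 1).Finite) :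
    ∃ h : ℝ, 0 < h ∧ ∀ a ∈ S, 0 < a → h ≤ a := by
  have hsmall : ∀ x : ℝ, 0 < x → ∀ᶠ h in 𝓝[>] (0 : ℝ), h ≤ x := fun _ hx =>
    nhdsWithin_le_nhds ((eventually_lt_nhds hx).mono fun _ => le_of_lt)
  obtain ⟨h, hpos, hle1, hleS⟩ :=
    (eventually_mem_nhdsWithin.and ((hsmall 1 one_pos).and
      (hS.eventually_all.2 fun x hx => hsmall x hx.2.1))).exists
  refine ⟨h, hpos, fun a ha hapos => ?_⟩
  rcases le_or_gt a 1 with ha1 | ha1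
  · exact hleS a ⟨ha, hapos, ha1⟩
  · linarith

variable {ι : Type*} [Fintype ι] {w : ι → ℝ}

-- After shifting by `L` all terms are nonnegative, so each one is bounded by the whole sum.
lemma finite_setOf_forall_le_sum_mul_le (hw : ∀ i, 0 < w i) (L : ℤ) (B : ℝ) :
    {c : ι → ℤ | (∀ i, L ≤ c i) ∧ ∑ i, (c i : ℝ) * w i ≤ B}.Finite := by
  classical
  let N : ι → ℤ := fun i => L + ⌈(B - L * ∑ j, w j) / w i⌉
  refine (Set.finite_Icc (fun _ => L) N).subset fun c ⟨hL, hB⟩ => ⟨hL, fun i => ?_⟩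
  have hterm : (c i - L : ℝ) * w i ≤ B - L * ∑ j, w j :=
    calc (c i - L : ℝ) * w i ≤ ∑ j, (c j - L : ℝ) * w j :=
          single_le_sum (f := fun j => (c j - L : ℝ) * w j)
            (fun j _ => mul_nonneg (sub_nonneg.2 (by exact_mod_cast hL j)) (hw j).le)
            (mem_univ i)
      _ = ∑ j, (c j : ℝ) * w j - L * ∑ j, w j := by
          simp only [sub_mul, sum_sub_distrib, mul_sum]
      _ ≤ B - L * ∑ j, w j := by linarith
  have hreal : (c i : ℝ) ≤ L + ⌈(B - L * ∑ j, w j) / w i⌉ := by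
    have := (le_div_iff₀ (hw i)).2 hterm
    linarith [Int.le_ceil ((B - L * ∑ j, w j) / w i)]
  exact_mod_cast hreal

lemma exists_pos_forall_le_sum_mul (hw : ∀ i, 0 < w i) (L : ℤ) :
    ∃ h : ℝ, 0 < h ∧ ∀ a : ℝ,
      (∃ c : ι → ℤ, (∀ i, L ≤ c i) ∧ a = ∑ i, (c i : ℝ) * w i) → 0 < a → h ≤ a := by
  refine exists_pos_forall_le_of_finite_inter_Ioc <|
    ((finite_setOf_forall_le_sum_mul_le hw L 1).image fun c => ∑ i, (c i : ℝ) * w i).subset ?_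
  rintro _ ⟨⟨c, hc, rfl⟩, -, hle⟩
  exact ⟨c, ⟨hc, hle⟩, rfl⟩

theorem positive_values_bounded_below_general (k : ℕ) (m : Fin k → ℝ) (hm : ∀ i, 0 < m i)
    (M r : ℕ) (hr : 0 < r) :
    ∃ h : ℝ, 0 < h ∧ ∀ a : ℝ,
      (∃ c : Fin k → ℤ, (∀ i, -(M : ℤ) ≤ c i) ∧ a = ∑ i, (c i : ℝ) * m i / r) →
      0 < a → h ≤ a := by
  have hw : ∀ i, 0 < m i / r := fun i => div_pos (hm i) (by exact_mod_cast hr)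
  simpa only [mul_div_assoc] using exists_pos_forall_le_sum_mul hw (-(M : ℤ))

/-- positive values of `∑ aᵢ mᵢ / r` with integer coefficients bounded
below by `-m` are bounded away from zero. -/
theorem positive_values_bounded_below (k : ℕ) (m : Fin k → ℝ) (hm : ∀ i, 0 < m i)
    (M r : ℕ) (hM : 0 < M) (hr : 0 < r) :
    ∃ h : ℝ, 0 < h ∧ ∀ a : ℝ,
      (∃ c : Fin k → ℤ, (∀ i, -(M : ℤ) ≤ c i) ∧ a = ∑ i, (c i : ℝ) * m i / r) →
      0 < a → h ≤ a :=
  positive_values_bounded_below_general k m hm M r hr
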